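/- Let L be a positive integer. Let G = (V,E) and G' = (V',E') be finite simple graphs whose vertices carry labels a_v = (x_v, r_v) and a'_{v'} = (x'_{v'}, r'_{v'}) respectively, and let v ∈ V, v' ∈ V'. Suppose the r-components are pairwise distinct on N_{L+1}(v) in G (i.e., r_s ≠ r_t for all distinct s,t ∈ N_{L+1}(v)) and pairwise distinct on N_{L+1}(v') in G'. If the level-(L+1) trees of the rooted balls coincide, T(R(G,v,L), v, L+1) = T(R(G',v',L), v', L+1), then (R(G,v,L), v) and (R(G',v',L), v') are isomorphic as rooted vertex-labeled graphs. -/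

import Mathlib

/-!
The level-`(L+1)` tree of the root records, for every vertex `u` at distance `d ≤ L`, a
level-`(L+1-d)` subtree equal to the level-`(L+1-d)` tree of some vertex of the other ball: follow
a shortest walk from the root, which stays inside the ball, and match neighbours step by step.
As `L + 1 - d ≥ 1`, each `u` thus has a partner `u'` with the same label and the same multiset of
neighbour labels. Distinct `r`-labels make labels determine vertices, so `u ↦ u'` is a
label-preserving bijection, and it preserves adjacency because the neighbours of `u` are read off
from their labels.
-/

/-- `N_L(v)`: the set of vertices at graph distance at most `L` from `v`
(including `v` itself). -/
def ballSet {V : Type} (G : SimpleGraph V) (v : V) (L : ℕ) : Set V :=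
  {u | G.edist v u ≤ (L : ℕ∞)}

theorem self_mem_ballSet {V : Type} (G : SimpleGraph V) (v : V) (L : ℕ) :
    v ∈ ballSet G v L := by
  simp only [ballSet, Set.mem_setOf_eq, SimpleGraph.edist_self]
  exact zero_le

noncomputable instance {V : Type} [Fintype V] (s : Set V) : Fintype ↥s :=
  (Set.toFinite s).fintype

/-- The type of level-`l` trees with labels in `A`. -/
def TreeT (A : Type) : ℕ → Type
  | 0 => A
  | (l + 1) => TreeT A l × Multiset (TreeT A l)

open Classical in
/-- The level-`l` tree of `v` in `G` with vertex labels `a`: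
`T(G, v, 0) = a_v` and `T(G, v, l) = (T(G, v, l−1), {T(G, u, l−1) : u ∈ N(v)})`
(the second component a multiset). -/
noncomputable def levelTree {V A : Type} [Fintype V] (G : SimpleGraph V) (a : V → A) :
    (l : ℕ) → V → TreeT A l
  | 0 => fun v => a v
  | (l + 1) => fun v =>
      (levelTree G a l v, (G.neighborFinset v).val.map (levelTree G a l))

theorem ballSet_mono {V : Type} (G : SimpleGraph V) (v : V) {L M : ℕ} (h : L ≤ M) :
    ballSet G v L ⊆ ballSet G v M :=
  fun _ hu => le_trans (α := ℕ∞) hu (by exact_mod_cast h)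

theorem injective_labels_of_pairwise_ne {V X Rt : Type} {G : SimpleGraph V} {v : V} {L : ℕ}
    {x : V → X} {r : V → Rt}
    (hdist : ∀ s t, s ∈ ballSet G v (L + 1) → t ∈ ballSet G v (L + 1) →
      s ≠ t → r s ≠ r t) :
    Function.Injective fun u : ballSet G v L => (x u.1, r u.1) := fun u₁ u₂ h =>
  Subtype.ext (not_not.mp fun hne => hdist _ _ (ballSet_mono G v L.le_succ u₁.2)
    (ballSet_mono G v L.le_succ u₂.2) hne (congrArg Prod.snd h))

section LevelTree

variable {V V' A : Type} [Fintype V] [Fintype V'] {G : SimpleGraph V} {G' : SimpleGraph V'}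
  {a : V → A} {a' : V' → A}

theorem levelTree_eq_of_le {m n : ℕ} {u : V} {u' : V'}
    (h : levelTree G a n u = levelTree G' a' n u') (hmn : m ≤ n) :
    levelTree G a m u = levelTree G' a' m u' := by
  obtain ⟨d, rfl⟩ := Nat.exists_eq_add_of_le hmn
  induction d with
  | zero => exact h
  | succ d ih => exact ih (congrArg Prod.fst h) (by omega)

theorem levelTree_one_eq_iff {u : V} {u' : V'} :
    levelTree G a 1 u = levelTree G' a' 1 u' ↔
      a u = a' u' ∧ (G.neighborFinset u).val.map a = (G'.neighborFinset u').val.map a' :=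
  Prod.ext_iff

theorem exists_adj_levelTree_eq {k : ℕ} {u n : V} {u' : V'}
    (h : levelTree G a (k + 1) u = levelTree G' a' (k + 1) u') (hn : G.Adj u n) :
    ∃ n', G'.Adj u' n' ∧ levelTree G a k n = levelTree G' a' k n' := by
  have hnbr : (G.neighborFinset u).val.map (levelTree G a k) =
      (G'.neighborFinset u').val.map (levelTree G' a' k) := congrArg Prod.snd h
  have hmem : levelTree G a k n ∈ (G'.neighborFinset u').val.map (levelTree G' a' k) := by
    rw [← hnbr]
    exact Multiset.mem_map_of_mem _ ((G.mem_neighborFinset u n).mpr hn)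
  obtain ⟨n', hn', heq⟩ := Multiset.mem_map.mp hmem
  exact ⟨n', (G'.mem_neighborFinset u' n').mp hn', heq.symm⟩

theorem exists_levelTree_eq_of_walk {k : ℕ} {u w : V} {u' : V'} (p : G.Walk u w)
    (h : levelTree G a (k + p.length) u = levelTree G' a' (k + p.length) u') :
    ∃ w', levelTree G a k w = levelTree G' a' k w' := by
  induction p generalizing u' with
  | nil => exact ⟨u', h⟩
  | cons hadj p ih =>
    obtain ⟨n', -, hn'⟩ := exists_adj_levelTree_eq h hadj
    exact ih hn'

end LevelTree

theorem exists_walk_induce_ballSet {V : Type} (G : SimpleGraph V) (v : V) (L : ℕ) {u : V}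
    (hu : u ∈ ballSet G v L) :
    ∃ p : (G.induce (ballSet G v L)).Walk ⟨v, self_mem_ballSet G v L⟩ ⟨u, hu⟩,
      p.length ≤ L := by
  classical
  have hvu : G.edist v u ≤ L := hu
  obtain ⟨p, hp⟩ := SimpleGraph.exists_walk_of_edist_ne_top (ne_top_of_le_ne_top (by simp) hvu)
  have hlen : p.length ≤ L := by rw [← hp] at hvu; exact_mod_cast hvu
  -- every vertex of a shortest walk is at most as far from `v` as its endpoint
  have hsupp : ∀ w ∈ p.support, w ∈ ballSet G v L := fun w hw =>
    le_trans (α := ℕ∞) (SimpleGraph.Walk.edist_le _)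
      (by exact_mod_cast (p.length_takeUntil_le_length hw).trans hlen)
  refine ⟨p.induce _ hsupp, ?_⟩
  rwa [← SimpleGraph.Walk.length_map (SimpleGraph.Embedding.induce _).toHom,
    SimpleGraph.Walk.map_induce]

theorem exists_levelTree_one_eq_of_levelTree_eq {V W A : Type} [Fintype V] [Fintype W]
    {G : SimpleGraph V} {H : SimpleGraph W} {L : ℕ} {v : V} {a : ballSet G v L → A}
    {b : W → A} {w : W} (h : levelTree (G.induce (ballSet G v L)) a (L + 1) ⟨v, self_mem_ballSet G v L⟩ =
      levelTree H b (L + 1) w)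
    (u : ballSet G v L) :
    ∃ u', levelTree (G.induce (ballSet G v L)) a 1 u = levelTree H b 1 u' := by
  obtain ⟨p, hp⟩ := exists_walk_induce_ballSet G v L u.2
  obtain ⟨k, hk⟩ : ∃ k, L + 1 = (k + 1) + p.length := ⟨L - p.length, by omega⟩
  rw [hk] at h
  obtain ⟨u', hu'⟩ := exists_levelTree_eq_of_walk p h
  exact ⟨u', levelTree_eq_of_le hu' (by omega)⟩

theorem exists_iso_of_injective_labels {V V' A : Type*} {G : SimpleGraph V} {G' : SimpleGraph V'}
    [∀ u, Fintype (G.neighborSet u)] [∀ u', Fintype (G'.neighborSet u')]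
    {a : V → A} {a' : V' → A} (ha : Function.Injective a) (ha' : Function.Injective a')
    (hmatch : ∀ u, ∃ u', a' u' = a u ∧
      (G'.neighborFinset u').val.map a' = (G.neighborFinset u).val.map a)
    (hsurj : ∀ u', ∃ u, a u = a' u') :
    ∃ φ : G ≃g G', ∀ u, a' (φ u) = a u := by
  choose f hf hnbr using hmatch
  have hf_bij : Function.Bijective f := by
    refine ⟨fun u₁ u₂ h => ha ?_, fun u' => ?_⟩
    · rw [← hf, ← hf, h]
    · obtain ⟨u, hu⟩ := hsurj u'
      exact ⟨u, ha' (by rw [hf, hu])⟩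
  refine ⟨⟨Equiv.ofBijective f hf_bij, fun {u₁ u₂} => ?_⟩, hf⟩
  calc G'.Adj (f u₁) (f u₂)
      ↔ a' (f u₂) ∈ (G'.neighborFinset (f u₁)).val.map a' := by
        rw [Multiset.mem_map_of_injective ha', Finset.mem_val, SimpleGraph.mem_neighborFinset]
    _ ↔ G.Adj u₁ u₂ := by
        rw [hnbr, hf, Multiset.mem_map_of_injective ha, Finset.mem_val,
          SimpleGraph.mem_neighborFinset]

theorem stmt_13_general (L : ℕ) (X Rt : Type)
    (V V' : Type) [Fintype V] [Fintype V']
    (G : SimpleGraph V) (G' : SimpleGraph V')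
    (x : V → X) (r : V → Rt) (x' : V' → X) (r' : V' → Rt)
    (v : V) (v' : V')
    (hdist : ∀ s t, s ∈ ballSet G v (L + 1) → t ∈ ballSet G v (L + 1) →
      s ≠ t → r s ≠ r t)
    (hdist' : ∀ s t, s ∈ ballSet G' v' (L + 1) → t ∈ ballSet G' v' (L + 1) →
      s ≠ t → r' s ≠ r' t)
    (htree : levelTree (G.induce (ballSet G v L)) (fun u => (x u.1, r u.1)) (L + 1)
        ⟨v, self_mem_ballSet G v L⟩ =
      levelTree (G'.induce (ballSet G' v' L)) (fun u => (x' u.1, r' u.1)) (L + 1)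
        ⟨v', self_mem_ballSet G' v' L⟩) :
    ∃ φ : (G.induce (ballSet G v L)) ≃g (G'.induce (ballSet G' v' L)),
      (∀ u, x' (φ u).1 = x u.1 ∧ r' (φ u).1 = r u.1) ∧
      (φ ⟨v, self_mem_ballSet G v L⟩).1 = v' := by
  have ha' : Function.Injective fun u : ballSet G' v' L => (x' u.1, r' u.1) :=
    injective_labels_of_pairwise_ne hdist'
  obtain ⟨φ, hφ⟩ := exists_iso_of_injective_labels (injective_labels_of_pairwise_ne hdist) ha'
    (fun u => by
      obtain ⟨u', hu'⟩ := exists_levelTree_one_eq_of_levelTree_eq htree u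
      obtain ⟨hlabel, hnbr⟩ := levelTree_one_eq_iff.mp hu'
      exact ⟨u', hlabel.symm, hnbr.symm⟩)
    (fun u' => by
      obtain ⟨u, hu⟩ := exists_levelTree_one_eq_of_levelTree_eq htree.symm u'
      exact ⟨u, (levelTree_eq_of_le hu zero_le_one).symm⟩)
  have hroot : φ ⟨v, self_mem_ballSet G v L⟩ = ⟨v', self_mem_ballSet G' v' L⟩ :=
    ha' ((hφ _).trans (levelTree_eq_of_le htree (Nat.zero_le _)))
  exact ⟨φ, fun u => Prod.ext_iff.mp (hφ u), congrArg Subtype.val hroot⟩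

/-- Let `L ≥ 1`, let `G, G'` be finite simple graphs with vertex labels
`a_v = (x_v, r_v)` (resp. `a'_{v'} = (x'_{v'}, r'_{v'})`), and let `v ∈ V`, `v' ∈ V'`.
Suppose the `r`-components are pairwise distinct on `N_{L+1}(v)` and on `N_{L+1}(v')`.
If the level-`(L+1)` trees of the rooted balls coincide,
`T(R(G,v,L), v, L+1) = T(R(G',v',L), v', L+1)`, then `(R(G,v,L), v)` and
`(R(G',v',L), v')` are isomorphic as rooted vertex-labeled graphs. -/
theorem stmt_13 (L : ℕ) (hL : 0 < L) (X Rt : Type)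
    (V V' : Type) [Fintype V] [Fintype V']
    (G : SimpleGraph V) (G' : SimpleGraph V')
    (x : V → X) (r : V → Rt) (x' : V' → X) (r' : V' → Rt)
    (v : V) (v' : V')
    (hdist : ∀ s t, s ∈ ballSet G v (L + 1) → t ∈ ballSet G v (L + 1) →
      s ≠ t → r s ≠ r t)
    (hdist' : ∀ s t, s ∈ ballSet G' v' (L + 1) → t ∈ ballSet G' v' (L + 1) →
      s ≠ t → r' s ≠ r' t)
    (htree : levelTree (G.induce (ballSet G v L)) (fun u => (x u.1, r u.1)) (L + 1)
        ⟨v, self_mem_ballSet G v L⟩ =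
      levelTree (G'.induce (ballSet G' v' L)) (fun u => (x' u.1, r' u.1)) (L + 1)
        ⟨v', self_mem_ballSet G' v' L⟩) :
    ∃ φ : (G.induce (ballSet G v L)) ≃g (G'.induce (ballSet G' v' L)),
      (∀ u, x' (φ u).1 = x u.1 ∧ r' (φ u).1 = r u.1) ∧
      (φ ⟨v, self_mem_ballSet G v L⟩).1 = v' :=
  stmt_13_general L X Rt V V' G G' x r x' r' v v' hdist hdist' htree
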